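/- In the two-player visibility game, no closed Cartesian product set F = F_1 × F_2 that is a strict subset of [0, 0.5]^2 satisfies both of the following: (1) for each player i and each a_{-i} ∈ F_{-i}, there exists a_i ∈ F_i with U_i(a_i, a_{-i}) > U_i(ã_i, a_{-i}) for all ã_i ∈ [0,1] \ F_i; (2) for every profile a ∈ F, there exist a player i and a'_i ∈ F_i with U_i(a'_i, a_{-i}) > U_i(a_i, a_{-i}) and U_i(a'_i, a_{-i}) > U_i(ã_i, a_{-i}) for all ã_i ∈ [0,1] \ F_i. -/
import Mathlib


open Set Function

variable {ι : Type*} [Fintype ι] [DecidableEq ι] {α : ι → Type*}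

/-- Stability condition (1) of an equilibrium cycle: for every player `i` and every
opponent profile lying in `E`, some action in `E i` strictly outperforms every
action in `A i \ E i`. -/
def Stability (A E : ∀ i, Set (α i)) (U : ι → (∀ j, α j) → ℝ) : Prop :=
  ∀ (i : ι) (a : ∀ j, α j), (∀ j, j ≠ i → a j ∈ E j) →
    ∃ b ∈ E i, ∀ c ∈ A i \ E i,
      U i (update a i b) > U i (update a i c)

/-- Unrest condition (2) of an equilibrium cycle: at every profile in `E`, some player
has a strictly improving deviation inside `E i` that also strictly outperforms every
action in `A i \ E i`. -/
def Unrest (A E : ∀ i, Set (α i)) (U : ι → (∀ j, α j) → ℝ) : Prop :=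
  ∀ a : ∀ j, α j, (∀ j, a j ∈ E j) →
    ∃ i, ∃ b ∈ E i, U i (update a i b) > U i a ∧
      ∀ c ∈ A i \ E i, U i (update a i b) > U i (update a i c)

/-- Equilibrium cycle: a nonempty closed Cartesian product set satisfying
stability, unrest, and minimality (no nonempty closed Cartesian product strict
subset satisfies stability and unrest). -/
def IsEquilibriumCycle [∀ i, MetricSpace (α i)] (A E : ∀ i, Set (α i))
    (U : ι → (∀ j, α j) → ℝ) : Prop :=
  (∀ i, (E i).Nonempty) ∧ (∀ i, E i ⊆ A i) ∧ (∀ i, IsClosed (E i)) ∧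
  Stability A E U ∧ Unrest A E U ∧
  ∀ F : ∀ i, Set (α i), (∀ i, (F i).Nonempty) → (∀ i, IsClosed (F i)) →
    Set.pi Set.univ F ⊂ Set.pi Set.univ E → ¬(Stability A F U ∧ Unrest A F U)

/-- Pure Nash equilibrium of the game with action sets `A` and utilities `U`. -/
def IsPureNash (A : ∀ i, Set (α i)) (U : ι → (∀ j, α j) → ℝ)
    (a : ∀ j, α j) : Prop :=
  (∀ j, a j ∈ A j) ∧ ∀ i, ∀ b ∈ A i, U i a ≥ U i (update a i b)

/-- Payoff in the two-player visibility game: own action `x`, opponent action `y`. -/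
noncomputable def visPay (x y : ℝ) : ℝ :=
  if x < y then y - x else if x = y then 0 else 1 - x

/-- The opponent of a player in a two-player game. -/
def opp : Fin 2 → Fin 2 := fun i => if i = 0 then 1 else 0

/-- Utility functions of the two-player visibility game. -/
noncomputable def visU : Fin 2 → (Fin 2 → ℝ) → ℝ := fun i a => visPay (a i) (a (opp i))

/-- Action sets of the visibility game: `[0, 1]` for each player. -/
def visA : Fin 2 → Set ℝ := fun _ => Set.Icc 0 1

/-- The candidate equilibrium cycle `[0, 0.5]²`. -/
def visE : Fin 2 → Set ℝ := fun _ => Set.Icc 0 (1 / 2)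

section VisAux

lemma vis_opp_ne (i : Fin 2) : opp i ≠ i := by fin_cases i <;> decide

lemma vis_opp_opp (i : Fin 2) : opp (opp i) = i := by fin_cases i <;> decide

lemma vis_eq_opp_of_ne : ∀ i j : Fin 2, j ≠ i → j = opp i := by decide

lemma visPay_of_lt {x y : ℝ} (h : x < y) : visPay x y = y - x := if_pos h

lemma visPay_self (x : ℝ) : visPay x x = 0 := by simp [visPay]

lemma visPay_of_gt {x y : ℝ} (h : y < x) : visPay x y = 1 - x := by
  rw [visPay, if_neg (not_lt.2 h.le), if_neg h.ne']

lemma visPay_nonneg {x y : ℝ} (hx : x ∈ Set.Icc (0:ℝ) (1/2)) (hy : y ∈ Set.Icc (0:ℝ) (1/2)) :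
    0 ≤ visPay x y := by
  rcases lt_trichotomy x y with h | h | h
  · rw [visPay_of_lt h]; linarith
  · rw [h, visPay_self]
  · rw [visPay_of_gt h]; linarith [hx.2]

/-- The key dichotomy: if `b ∈ S` strictly beats every action outside `S`, then either
`(y, b) = (1/2, 0)` or `b > y` and the whole interval `[y, b]` lies in `S`. -/
lemma vis_dichotomy {S : Set ℝ} (hScl : IsClosed S) (hSsub : S ⊆ Set.Icc 0 (1/2))
    {b y : ℝ} (hb : b ∈ S) (hy : y ∈ Set.Icc (0:ℝ) (1/2))
    (H : ∀ c ∈ Set.Icc (0:ℝ) 1 \ S, visPay b y > visPay c y) :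
    (y = 1/2 ∧ b = 0) ∨ (y < b ∧ Set.Icc y b ⊆ S) := by
  have hb' : b ∈ Set.Icc (0:ℝ) (1/2) := hSsub hb
  have hp : visPay b y ≥ 1/2 := by
    by_contra h
    push_neg at h
    set p := visPay b y with hpdef
    have hp0 : 0 ≤ p := visPay_nonneg hb' hy
    set c : ℝ := 3/4 - p/2 with hcdef
    have hc1 : (1:ℝ)/2 < c := by rw [hcdef]; linarith
    have hcIcc : c ∈ Set.Icc (0:ℝ) 1 := ⟨by rw [hcdef]; linarith, by rw [hcdef]; linarith⟩
    have hcS : c ∉ S := fun hcs => absurd (hSsub hcs).2 (not_le.2 hc1)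
    have hyc : y < c := lt_of_le_of_lt hy.2 hc1
    have := H c ⟨hcIcc, hcS⟩
    rw [visPay_of_gt hyc] at this
    rw [hcdef] at this
    linarith
  rcases lt_trichotomy b y with h | h | h
  · left
    rw [visPay_of_lt h] at hp
    constructor
    · linarith [hy.2, hb'.1]
    · linarith [hy.2, hb'.1]
  · rw [h, visPay_self] at hp; linarith
  · right
    refine ⟨h, ?_⟩
    have hIoc : Set.Ioc y b ⊆ S := by
      intro z hz
      by_contra hzS
      have hzIcc : z ∈ Set.Icc (0:ℝ) 1 := ⟨le_trans hy.1 hz.1.le, le_trans hz.2 (by linarith [hb'.2])⟩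
      have := H z ⟨hzIcc, hzS⟩
      rw [visPay_of_gt h, visPay_of_gt hz.1] at this
      linarith [hz.2]
    calc Set.Icc y b = closure (Set.Ioc y b) := (closure_Ioc h.ne).symm
      _ ⊆ closure S := closure_mono hIoc
      _ = S := hScl.closure_eq

/-- Unfold `Stability` in the visibility game to a statement about `visPay`. -/
lemma vis_stab_apply {F : Fin 2 → Set ℝ} (hstab : Stability visA F visU)
    (i : Fin 2) {y : ℝ} (hy : y ∈ F (opp i)) :
    ∃ b ∈ F i, ∀ c ∈ Set.Icc (0:ℝ) 1 \ F i, visPay b y > visPay c y := by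
  obtain ⟨b, hbF, hb⟩ := hstab i (fun j => if j = i then 0 else y) (by
    intro j hj
    have hji : j = opp i := vis_eq_opp_of_ne i j hj
    simp only [if_neg hj]
    rw [hji]; exact hy)
  refine ⟨b, hbF, ?_⟩
  intro c hc
  have := hb c hc
  simpa [visU, update_self, update_of_ne (vis_opp_ne i), if_neg (vis_opp_ne i)] using this

/-- Unfold `Unrest` in the visibility game. -/
lemma vis_unrest_apply {F : Fin 2 → Set ℝ} (hun : Unrest visA F visU)
    {a : Fin 2 → ℝ} (ha : ∀ j, a j ∈ F j) :
    ∃ i, ∃ b ∈ F i, visPay b (a (opp i)) > visPay (a i) (a (opp i)) ∧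
      ∀ c ∈ Set.Icc (0:ℝ) 1 \ F i, visPay b (a (opp i)) > visPay c (a (opp i)) := by
  obtain ⟨i, b, hbF, himp, hout⟩ := hun a ha
  refine ⟨i, b, hbF, ?_, ?_⟩
  · have := himp
    simpa [visU, update_self, update_of_ne (vis_opp_ne i)] using this
  · intro c hc
    have := hout c hc
    simpa [visU, update_self, update_of_ne (vis_opp_ne i)] using this

/-- If `F k` contains a nontrivial interval `[0, b]`, then under stability it must be all
of `[0, 1/2]`. -/
lemma vis_full {F : Fin 2 → Set ℝ} (hcl : ∀ i, IsClosed (F i))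
    (hsub : ∀ i, F i ⊆ Set.Icc 0 (1/2)) (hstab : Stability visA F visU)
    (k : Fin 2) {b : ℝ} (hb0 : 0 < b) (hbI : Set.Icc 0 b ⊆ F k) :
    Set.Icc (0:ℝ) (1/2) ⊆ F k := by
  set T : Set ℝ := {t : ℝ | t ∈ Set.Icc (0:ℝ) (1/2) ∧ Set.Icc 0 t ⊆ F k} with hTdef
  have hbd : BddAbove T := ⟨1/2, fun t ht => ht.1.2⟩
  have hb' : min b (1/2) ∈ T := by
    refine ⟨⟨le_min hb0.le (by norm_num), min_le_right _ _⟩, ?_⟩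
    exact fun z hz => hbI ⟨hz.1, le_trans hz.2 (min_le_left _ _)⟩
  have hTne : T.Nonempty := ⟨_, hb'⟩
  set s : ℝ := sSup T with hsdef
  have hs0 : 0 < s := lt_of_lt_of_le (lt_min hb0 (by norm_num)) (le_csSup hbd hb')
  have hs2 : s ≤ 1/2 := csSup_le hTne fun t ht => ht.1.2
  have hsI : Set.Icc 0 s ⊆ F k := by
    have hIco : Set.Ico (0:ℝ) s ⊆ F k := by
      intro z hz
      obtain ⟨t, htT, hzt⟩ := exists_lt_of_lt_csSup hTne hz.2
      exact htT.2 ⟨hz.1, hzt.le⟩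
    calc Set.Icc 0 s = closure (Set.Ico 0 s) := (closure_Ico hs0.ne).symm
      _ ⊆ closure (F k) := closure_mono hIco
      _ = F k := (hcl k).closure_eq
  rcases eq_or_lt_of_le hs2 with heq | hlt
  · rw [← heq]; exact hsI
  · exfalso
    have hsF : s ∈ F k := hsI ⟨hs0.le, le_refl s⟩
    have hsIcc : s ∈ Set.Icc (0:ℝ) (1/2) := ⟨hs0.le, hs2⟩
    -- s ∈ F (opp k) by stability of player (opp k)
    have hsFk : s ∈ F (opp (opp k)) := by rw [vis_opp_opp]; exact hsF
    obtain ⟨b₁, hb₁F, hb₁⟩ := vis_stab_apply hstab (opp k) hsFk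
    have hd₁ := vis_dichotomy (hcl (opp k)) (hsub (opp k)) hb₁F hsIcc hb₁
    have hsFopp : s ∈ F (opp k) := by
      rcases hd₁ with ⟨h12, _⟩ | ⟨hlt₁, hIcc₁⟩
      · exact absurd h12 hlt.ne
      · exact hIcc₁ ⟨le_refl s, hlt₁.le⟩
    -- stability of player k at opponent action s
    obtain ⟨b₂, hb₂F, hb₂⟩ := vis_stab_apply hstab k hsFopp
    have hd₂ := vis_dichotomy (hcl k) (hsub k) hb₂F hsIcc hb₂
    rcases hd₂ with ⟨h12, _⟩ | ⟨hlt₂, hIcc₂⟩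
    · exact hlt.ne h12
    · have hb₂T : b₂ ∈ T := by
        refine ⟨hsub k hb₂F, ?_⟩
        intro z hz
        rcases le_or_gt z s with hzs | hzs
        · exact hsI ⟨hz.1, hzs⟩
        · exact hIcc₂ ⟨hzs.le, hz.2⟩
      have : b₂ ≤ s := le_csSup hbd hb₂T
      linarith

end VisAux

/-- In the visibility game, no nonempty closed Cartesian product strict
subset of `[0, 0.5]²` satisfies both the stability and unrest conditions. -/
theorem visibility_minimality :
    ∀ F : Fin 2 → Set ℝ, (∀ i, (F i).Nonempty) → (∀ i, IsClosed (F i)) →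
      Set.pi Set.univ F ⊂ Set.pi Set.univ visE →
      ¬(Stability visA F visU ∧ Unrest visA F visU) := by
  intro F hne hcl hss ⟨hstab, hun⟩
  -- F i ⊆ [0, 1/2]
  have hsub : ∀ i, F i ⊆ Set.Icc (0:ℝ) (1/2) := by
    intro i x hx
    have hmem : (fun j => if j = i then x else (hne j).choose) ∈ Set.pi Set.univ F := by
      intro j _
      by_cases hj : j = i
      · subst hj; simpa using hx
      · simpa [hj] using (hne j).choose_spec
    have := hss.1 hmem
    have hxE := this i (Set.mem_univ i)
    simpa [visE] using hxE
  -- sup of each F i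
  have hbdd : ∀ i, BddAbove (F i) := fun i => ⟨1/2, fun x hx => (hsub i hx).2⟩
  set M : Fin 2 → ℝ := fun i => sSup (F i) with hMdef
  have hMmem : ∀ i, M i ∈ F i := fun i => (hcl i).csSup_mem (hne i) (hbdd i)
  have hMub : ∀ i, ∀ x ∈ F i, x ≤ M i := fun i x hx => le_csSup (hbdd i) hx
  -- pick i with M i ≤ M (opp i)
  obtain ⟨i, hMle⟩ : ∃ i : Fin 2, M i ≤ M (opp i) := by
    rcases le_total (M 0) (M 1) with h | h
    · exact ⟨0, by simpa [opp] using h⟩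
    · exact ⟨1, by simpa [opp] using h⟩
  -- stability of player i at opponent action M (opp i)
  obtain ⟨b, hbF, hb⟩ := vis_stab_apply hstab i (hMmem (opp i))
  have hMoppIcc : M (opp i) ∈ Set.Icc (0:ℝ) (1/2) := hsub (opp i) (hMmem (opp i))
  have hd := vis_dichotomy (hcl i) (hsub i) hbF hMoppIcc hb
  have hkey : M (opp i) = 1/2 ∧ (0:ℝ) ∈ F i := by
    rcases hd with ⟨h12, hb0⟩ | ⟨hlt, _⟩
    · exact ⟨h12, hb0 ▸ hbF⟩
    · exact absurd (hMub i b hbF) (not_le.2 (lt_of_le_of_lt hMle hlt))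
  obtain ⟨hMhalf, h0Fi⟩ := hkey
  have hhalfF : (1/2 : ℝ) ∈ F (opp i) := hMhalf ▸ hMmem (opp i)
  -- Unrest at the profile (0 at i, 1/2 at opp i)
  set a : Fin 2 → ℝ := fun j => if j = i then 0 else 1/2 with hadef
  have haF : ∀ j, a j ∈ F j := by
    intro j
    by_cases hj : j = i
    · subst hj; simpa [hadef] using h0Fi
    · have hji : j = opp i := vis_eq_opp_of_ne i j hj
      simp only [hadef, if_neg hj]
      rw [hji]; exact hhalfF
  obtain ⟨k, b', hb'F, himp, hout⟩ := vis_unrest_apply hun haF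
  have hai : a i = 0 := by simp [hadef]
  have haoi : a (opp i) = 1/2 := by simp [hadef, vis_opp_ne i]
  have hki : k ≠ i := by
    intro hk
    subst hk
    rw [hai, haoi] at himp
    have hb'Icc : b' ∈ Set.Icc (0:ℝ) (1/2) := hsub k hb'F
    have h0half : visPay (0:ℝ) (1/2) = 1/2 := by
      rw [visPay_of_lt (by norm_num)]; norm_num
    rw [h0half] at himp
    rcases lt_trichotomy b' (1/2 : ℝ) with h | h | h
    · rw [visPay_of_lt h] at himp; linarith [hb'Icc.1]
    · rw [h, visPay_self] at himp; linarith
    · linarith [hb'Icc.2]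
  have hkoi : k = opp i := vis_eq_opp_of_ne i k hki
  have haok : a (opp k) = 0 := by rw [hkoi, vis_opp_opp]; exact hai
  rw [haok] at hout
  have h0Icc : (0:ℝ) ∈ Set.Icc (0:ℝ) (1/2) := by norm_num
  have hdk := vis_dichotomy (hcl k) (hsub k) hb'F h0Icc hout
  have hFk : Set.Icc (0:ℝ) (1/2) ⊆ F k := by
    rcases hdk with ⟨h12, _⟩ | ⟨hlt, hIcc⟩
    · norm_num at h12
    · exact vis_full hcl hsub hstab k hlt hIcc
  -- Now F (opp i) = [0,1/2]; get the same for F i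
  have h0Fopp : (0:ℝ) ∈ F (opp i) := by rw [← hkoi]; exact hFk h0Icc
  obtain ⟨b₃, hb₃F, hb₃⟩ := vis_stab_apply hstab i h0Fopp
  have hd₃ := vis_dichotomy (hcl i) (hsub i) hb₃F h0Icc hb₃
  have hFi : Set.Icc (0:ℝ) (1/2) ⊆ F i := by
    rcases hd₃ with ⟨h12, _⟩ | ⟨hlt, hIcc⟩
    · norm_num at h12
    · exact vis_full hcl hsub hstab i hlt hIcc
  -- conclude F = visE
  have hFE : ∀ j, F j = visE j := by
    intro j
    have : j = i ∨ j = opp i := by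
      by_cases hj : j = i
      · exact Or.inl hj
      · exact Or.inr (vis_eq_opp_of_ne i j hj)
    rcases this with hj | hj
    · subst hj; exact le_antisymm (hsub j) hFi
    · subst hj; exact le_antisymm (hsub (opp i)) (hkoi ▸ hFk)
  exact hss.ne (by rw [funext hFE])
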